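/- arXiv:1110.1243 — 2 statements merged into one kernel-verified Lean document; each statement's English description precedes it below -/
import Mathlib

section
/- Let X and Y be Banach spaces, T : X → Y a bounded linear operator with adjoint T* : Y* → X*, and let (y*_ν)_{ν∈Λ} be a ρ*-Cauchy net in the closed unit ball B_{Y*}. Then inf_{ν₀∈Λ} sup_{ν,ν'≥ν₀} ‖T* y*_ν − T* y*_{ν'}‖ ≤ 2·ω(T(B_X)). -/
/-!
Given `ε > 0`, choose a weakly compact `K` with every point of `T(B_X)` within `ω + ε` of `K`.
Since weakly compact sets are bounded, the ρ*-Cauchy net is eventually uniformly `ε`-Cauchy on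
`K`. Writing `Tx = k + (Tx - k)`, the part `k ∈ K` contributes at most `ε` to
`|y*_ν(Tx) - y*_{ν'}(Tx)|`, and the rest at most `2 (ω + ε)` because `‖y*_ν‖ ≤ 1`.
-/

open Metric NormedSpace Filter Topology Set

noncomputable section

/-- A subset of a Banach space is weakly compact if it is compact in the weak topology. -/
def IsWeaklyCompact {Z : Type*} [NormedAddCommGroup Z] [NormedSpace ℝ Z] (K : Set Z) : Prop :=
  IsCompact (toWeakSpace ℝ Z '' K)

/-- `ca (x_k) = inf_n sup_{i,j ≥ n} ‖x_i - x_j‖`. -/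
def ca {Z : Type*} [NormedAddCommGroup Z] (x : ℕ → Z) : ℝ :=
  ⨅ n : ℕ, sSup {r : ℝ | ∃ i j : ℕ, n ≤ i ∧ n ≤ j ∧ r = ‖x i - x j‖}

/-- `wca` is the infimum of `ca` over all subsequences. -/
def wca {Z : Type*} [NormedAddCommGroup Z] (x : ℕ → Z) : ℝ :=
  ⨅ φ : {φ : ℕ → ℕ // StrictMono φ}, ca (x ∘ φ)

/-- A sequence is weakly Cauchy if `(x*(x_k))` converges for every functional `x*`. -/
def WeaklyCauchy {Z : Type*} [NormedAddCommGroup Z] [NormedSpace ℝ Z] (x : ℕ → Z) : Prop :=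
  ∀ f : StrongDual ℝ Z, ∃ l : ℝ, Tendsto (fun n => f (x n)) atTop (nhds l)

/-- A sequence is weakly null if `x*(x_k) → 0` for every functional `x*`. -/
def WeaklyNull {Z : Type*} [NormedAddCommGroup Z] [NormedSpace ℝ Z] (x : ℕ → Z) : Prop :=
  ∀ f : StrongDual ℝ Z, Tendsto (fun n => f (x n)) atTop (nhds 0)

/-- `cc T`: measure of non-complete-continuity of an operator. -/
def cc {X Y : Type*} [NormedAddCommGroup X] [NormedSpace ℝ X]
    [NormedAddCommGroup Y] [NormedSpace ℝ Y] (T : X →L[ℝ] Y) : ℝ :=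
  sSup {r : ℝ | ∃ x : ℕ → X, (∀ n, ‖x n‖ ≤ 1) ∧ WeaklyCauchy x ∧
    r = ca (fun n => T (x n))}

/-- Non-symmetrized Hausdorff distance `d̂(A,B) = sup_{a ∈ A} dist(a, B)`. -/
def dhat {Z : Type*} [NormedAddCommGroup Z] (A B : Set Z) : ℝ :=
  ⨆ a : A, infDist (a : Z) B

/-- de Blasi measure of weak non-compactness. -/
def deBlasiOmega {Z : Type*} [NormedAddCommGroup Z] [NormedSpace ℝ Z] (A : Set Z) : ℝ :=
  ⨅ K : {K : Set Z // K.Nonempty ∧ IsWeaklyCompact K}, dhat A K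

/-- Hausdorff measure of non-compactness. -/
def hausdorffChi {Z : Type*} [NormedAddCommGroup Z] (A : Set Z) : ℝ :=
  ⨅ F : {F : Set Z // F.Finite ∧ F.Nonempty}, dhat A F

/-- weak* closure of a set of functionals. -/
def wstarClosure {E : Type*} [NormedAddCommGroup E] [NormedSpace ℝ E]
    (A : Set (StrongDual ℝ E)) : Set (StrongDual ℝ E) :=
  StrongDual.toWeakDual ⁻¹' closure (StrongDual.toWeakDual '' A)

/-- `wk_Z(A) = d̂(cl_{w*}(ι(A)), ι(Z))` in the bidual. -/
def wkMeasure {Z : Type*} [NormedAddCommGroup Z] [NormedSpace ℝ Z] (A : Set Z) : ℝ :=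
  dhat (wstarClosure ((inclusionInDoubleDual ℝ Z) '' A))
    (Set.range (inclusionInDoubleDual ℝ Z))

/-- `z` is a weak* cluster point of the sequence `u` of functionals. -/
def IsWeakStarClusterPt {E : Type*} [NormedAddCommGroup E] [NormedSpace ℝ E]
    (z : StrongDual ℝ E) (u : ℕ → StrongDual ℝ E) : Prop :=
  MapClusterPt (StrongDual.toWeakDual z) atTop (fun n => StrongDual.toWeakDual (u n))

/-- `wck(A)`. -/
def wck {Z : Type*} [NormedAddCommGroup Z] [NormedSpace ℝ Z] (A : Set Z) : ℝ :=
  sSup {r : ℝ | ∃ x : ℕ → Z, (∀ n, x n ∈ A) ∧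
    r = sInf {s : ℝ | ∃ (z : StrongDual ℝ (StrongDual ℝ Z)) (x₀ : Z),
      IsWeakStarClusterPt z (fun n => inclusionInDoubleDual ℝ Z (x n)) ∧
      s = ‖z - inclusionInDoubleDual ℝ Z x₀‖}}

/-- `ca_ρ` of a sequence. -/
def caRho {Z : Type*} [NormedAddCommGroup Z] [NormedSpace ℝ Z] (x : ℕ → Z) : ℝ :=
  ⨆ K : {K : Set (StrongDual ℝ Z) // K ⊆ closedBall 0 1 ∧ IsWeaklyCompact K},
    ⨅ n : ℕ, sSup {r : ℝ | ∃ i j : ℕ, n ≤ i ∧ n ≤ j ∧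
      ∃ f ∈ K.1, r = |f (x i) - f (x j)|}

/-- `wca_ρ` of a sequence. -/
def wcaRho {Z : Type*} [NormedAddCommGroup Z] [NormedSpace ℝ Z] (x : ℕ → Z) : ℝ :=
  ⨅ φ : {φ : ℕ → ℕ // StrictMono φ}, caRho (x ∘ φ)

/-- `ca_{ρ*}` of a sequence in a dual space. -/
def caRhoStar {Z : Type*} [NormedAddCommGroup Z] [NormedSpace ℝ Z]
    (x : ℕ → StrongDual ℝ Z) : ℝ :=
  ⨆ K : {K : Set Z // K ⊆ closedBall 0 1 ∧ IsWeaklyCompact K},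
    ⨅ n : ℕ, sSup {r : ℝ | ∃ i j : ℕ, n ≤ i ∧ n ≤ j ∧
      ∃ v ∈ K.1, r = |x i v - x j v|}

/-- `wca_{ρ*}` of a sequence in a dual space. -/
def wcaRhoStar {Z : Type*} [NormedAddCommGroup Z] [NormedSpace ℝ Z]
    (x : ℕ → StrongDual ℝ Z) : ℝ :=
  ⨅ φ : {φ : ℕ → ℕ // StrictMono φ}, caRhoStar (x ∘ φ)

/-- `δ(x_k)`. -/
def deltaSeq {Z : Type*} [NormedAddCommGroup Z] [NormedSpace ℝ Z] (x : ℕ → Z) : ℝ :=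
  ⨆ f : (closedBall (0 : StrongDual ℝ Z) 1),
    ⨅ n : ℕ, sSup {r : ℝ | ∃ i j : ℕ, n ≤ i ∧ n ≤ j ∧
      r = |(f : StrongDual ℝ Z) (x i) - (f : StrongDual ℝ Z) (x j)|}

/-- The adjoint of a bounded operator between Banach spaces. -/
def adjointOp {X Y : Type*} [NormedAddCommGroup X] [NormedSpace ℝ X]
    [NormedAddCommGroup Y] [NormedSpace ℝ Y] (T : X →L[ℝ] Y) :
    StrongDual ℝ Y →L[ℝ] StrongDual ℝ X :=
  (ContinuousLinearMap.compL ℝ X Y ℝ).flip T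

/-- A net `(y*_ν)` in `B_{Y*}` is ρ*-Cauchy if it is uniformly Cauchy on every weakly
compact subset of `B_Y`. -/
def RhoStarCauchyNet {Y : Type*} [NormedAddCommGroup Y] [NormedSpace ℝ Y]
    {Λ : Type*} [Preorder Λ] (y : Λ → StrongDual ℝ Y) : Prop :=
  ∀ K : Set Y, K ⊆ closedBall 0 1 → IsWeaklyCompact K → ∀ ε > (0 : ℝ), ∃ ν₀ : Λ,
    ∀ ν ν' : Λ, ν₀ ≤ ν → ν₀ ≤ ν' → ∀ v ∈ K, |y ν v - y ν' v| ≤ ε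

open Pointwise Bornology

section WeaklyCompact

variable {Z : Type*} [NormedAddCommGroup Z] [NormedSpace ℝ Z]

/-- Weakly compact sets are weakly bounded, hence norm bounded by the uniform boundedness
principle applied to their image in the bidual. -/
theorem IsWeaklyCompact.isBounded {K : Set Z} (hK : IsWeaklyCompact K) : IsBounded K := by
  have hpt : ∀ f : StrongDual ℝ Z, ∃ C, ∀ z : K, ‖inclusionInDoubleDual ℝ Z z f‖ ≤ C := by
    intro f
    obtain ⟨C, hC⟩ := (hK.image (WeakBilin.eval_continuous _ f)).isBounded.exists_norm_le
    exact ⟨C, fun z => hC _ ⟨_, mem_image_of_mem _ z.2, rfl⟩⟩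
  obtain ⟨C, hC⟩ := banach_steinhaus hpt
  refine isBounded_iff_forall_norm_le.2 ⟨C, fun z hz => ?_⟩
  rw [← (inclusionInDoubleDualLi ℝ (E := Z)).norm_map z]
  exact hC ⟨z, hz⟩

theorem IsWeaklyCompact.smul {K : Set Z} (hK : IsWeaklyCompact K) (c : ℝ) :
    IsWeaklyCompact (c • K) := by
  rw [IsWeaklyCompact, image_smul_set]
  exact IsCompact.smul c hK

end WeaklyCompact

section DeBlasi

variable {Z : Type*} [NormedAddCommGroup Z]

theorem infDist_le_dhat {A B : Set Z} (hA : IsBounded A) (hB : B.Nonempty) {a : Z}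
    (ha : a ∈ A) : infDist a B ≤ dhat A B := by
  obtain ⟨b, hb⟩ := hB
  obtain ⟨r, hr⟩ := hA.subset_closedBall b
  refine le_ciSup (f := fun a : A => infDist (a : Z) B) ⟨r, ?_⟩ ⟨a, ha⟩
  rintro _ ⟨a', rfl⟩
  exact (infDist_le_dist_of_mem hb).trans (hr a'.2)

variable [NormedSpace ℝ Z]

theorem deBlasiOmega_nonneg (A : Set Z) : 0 ≤ deBlasiOmega A :=
  Real.iInf_nonneg fun _ => Real.iSup_nonneg fun _ => infDist_nonneg

theorem exists_isWeaklyCompact_forall_exists_dist_lt {A : Set Z} (hA : IsBounded A) {ε : ℝ}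
    (hε : 0 < ε) : ∃ K, IsWeaklyCompact K ∧ ∀ a ∈ A, ∃ k ∈ K, dist a k < deBlasiOmega A + ε := by
  have : Nonempty {K : Set Z // K.Nonempty ∧ IsWeaklyCompact K} :=
    ⟨⟨{0}, singleton_nonempty 0, by simp [IsWeaklyCompact]⟩⟩
  obtain ⟨⟨K, hKne, hKwc⟩, hK⟩ := exists_lt_of_ciInf_lt (lt_add_of_pos_right (deBlasiOmega A) hε)
  refine ⟨K, hKwc, fun a ha => (infDist_lt_iff hKne).1 ?_⟩
  exact (infDist_le_dhat hA hKne ha).trans_lt hK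

end DeBlasi

theorem RhoStarCauchyNet.exists_forall_abs_sub_le {Y : Type*} [NormedAddCommGroup Y]
    [NormedSpace ℝ Y] {Λ : Type*} [Preorder Λ] {y : Λ → StrongDual ℝ Y}
    (hy : RhoStarCauchyNet y) {K : Set Y} (hK : IsWeaklyCompact K) {ε : ℝ} (hε : 0 < ε) :
    ∃ ν₀, ∀ ν ν', ν₀ ≤ ν → ν₀ ≤ ν' → ∀ v ∈ K, |y ν v - y ν' v| ≤ ε := by
  obtain ⟨M, hM, hKM⟩ := hK.isBounded.exists_pos_norm_le
  have hsub : M⁻¹ • K ⊆ closedBall 0 1 := by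
    rintro _ ⟨v, hv, rfl⟩
    rw [mem_closedBall_zero_iff, norm_smul, norm_inv, Real.norm_of_nonneg hM.le]
    exact inv_mul_le_one_of_le₀ (hKM v hv) hM.le
  obtain ⟨ν₀, hν₀⟩ := hy _ hsub (hK.smul M⁻¹) (ε / M) (div_pos hε hM)
  refine ⟨ν₀, fun ν ν' hν hν' v hv => ?_⟩
  have h := hν₀ ν ν' hν hν' _ (smul_mem_smul_set hv)
  rw [map_smul, map_smul, ← smul_sub, smul_eq_mul, abs_mul, abs_of_pos (inv_pos.2 hM),
    inv_mul_le_iff₀ hM, mul_div_cancel₀ ε hM.ne'] at h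
  exact h

theorem norm_adjointOp_sub_le {X Y : Type*} [NormedAddCommGroup X] [NormedSpace ℝ X]
    [NormedAddCommGroup Y] [NormedSpace ℝ Y] (T : X →L[ℝ] Y) {f g : StrongDual ℝ Y}
    (hf : ‖f‖ ≤ 1) (hg : ‖g‖ ≤ 1) {K : Set Y} {r η : ℝ}
    (hK : ∀ x : X, ‖x‖ ≤ 1 → ∃ k ∈ K, ‖T x - k‖ ≤ r) (hfg : ∀ k ∈ K, |f k - g k| ≤ η) :
    ‖adjointOp T f - adjointOp T g‖ ≤ 2 * r + η := by
  have hbound : ∀ x : X, ‖x‖ ≤ 1 → ‖(adjointOp T f - adjointOp T g) x‖ ≤ 2 * r + η := by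
    intro x hx
    obtain ⟨k, hk, hxk⟩ := hK x hx
    have hsplit : (adjointOp T f - adjointOp T g) x = f (T x - k) - g (T x - k) + (f k - g k) := by
      change f (T x) - g (T x) = _
      simp only [map_sub]
      ring
    rw [hsplit, Real.norm_eq_abs]
    calc |f (T x - k) - g (T x - k) + (f k - g k)|
        ≤ |f (T x - k)| + |g (T x - k)| + |f k - g k| :=
          (abs_add_le _ _).trans (add_le_add (abs_sub _ _) le_rfl)
      _ ≤ 1 * r + 1 * r + η := by
          gcongr
          · exact f.le_of_opNorm_le_of_le hf hxk
          · exact g.le_of_opNorm_le_of_le hg hxk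
          · exact hfg k hk
      _ = 2 * r + η := by ring
  have hnonneg : 0 ≤ 2 * r + η := (norm_nonneg _).trans (hbound 0 (by simp))
  exact ContinuousLinearMap.opNorm_le_of_unit_norm hnonneg fun x hx => hbound x hx.le

theorem statement3_general {X Y : Type*} [NormedAddCommGroup X] [NormedSpace ℝ X]
    [NormedAddCommGroup Y] [NormedSpace ℝ Y] (T : X →L[ℝ] Y)
    {Λ : Type*} [Preorder Λ]
    (y : Λ → StrongDual ℝ Y) (hy : ∀ ν, ‖y ν‖ ≤ 1) (hcauchy : RhoStarCauchyNet y) :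
    (⨅ ν₀ : Λ, sSup {r : ℝ | ∃ ν ν' : Λ, ν₀ ≤ ν ∧ ν₀ ≤ ν' ∧
        r = ‖adjointOp T (y ν) - adjointOp T (y ν')‖}) ≤
      2 * deBlasiOmega (T '' closedBall 0 1) := by
  set ω := deBlasiOmega (T '' closedBall 0 1)
  refine le_of_forall_pos_le_add fun ε hε => ?_
  obtain ⟨K, hKwc, hK⟩ := exists_isWeaklyCompact_forall_exists_dist_lt
    (T.lipschitz.isBounded_image isBounded_closedBall) (ε := ε / 4) (by positivity)
  obtain ⟨ν₀, hν₀⟩ := hcauchy.exists_forall_abs_sub_le hKwc (ε := ε / 2) (by positivity)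
  have hTK : ∀ x : X, ‖x‖ ≤ 1 → ∃ k ∈ K, ‖T x - k‖ ≤ ω + ε / 4 := fun x hx => by
    obtain ⟨k, hk, hxk⟩ := hK (T x) (mem_image_of_mem T (mem_closedBall_zero_iff.2 hx))
    exact ⟨k, hk, (dist_eq_norm (T x) k).symm.le.trans hxk.le⟩
  refine (ciInf_le ⟨0, ?_⟩ ν₀).trans (Real.sSup_le ?_ ?_)
  · rintro _ ⟨ν, rfl⟩
    exact Real.sSup_nonneg (by rintro _ ⟨_, _, _, _, rfl⟩; exact norm_nonneg _)
  · rintro _ ⟨ν, ν', hν, hν', rfl⟩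
    have := norm_adjointOp_sub_le T (hy ν) (hy ν') hTK (hν₀ ν ν' hν hν')
    linarith
  · linarith [deBlasiOmega_nonneg (T '' closedBall 0 1)]

/-- For a bounded operator `T : X → Y` and a ρ*-Cauchy net `(y*_ν)` in `B_{Y*}`,
`inf_{ν₀} sup_{ν,ν' ≥ ν₀} ‖T* y*_ν − T* y*_{ν'}‖ ≤ 2 ω(T(B_X))`. -/
theorem statement3 {X Y : Type*} [NormedAddCommGroup X] [NormedSpace ℝ X] [CompleteSpace X]
    [NormedAddCommGroup Y] [NormedSpace ℝ Y] [CompleteSpace Y] (T : X →L[ℝ] Y)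
    {Λ : Type*} [Preorder Λ] [Nonempty Λ] (hdir : ∀ a b : Λ, ∃ c : Λ, a ≤ c ∧ b ≤ c)
    (y : Λ → StrongDual ℝ Y) (hy : ∀ ν, ‖y ν‖ ≤ 1) (hcauchy : RhoStarCauchyNet y) :
    (⨅ ν₀ : Λ, sSup {r : ℝ | ∃ ν ν' : Λ, ν₀ ≤ ν ∧ ν₀ ≤ ν' ∧
        r = ‖adjointOp T (y ν) - adjointOp T (y ν')‖}) ≤
      2 * deBlasiOmega (T '' closedBall 0 1) :=
  statement3_general T y hy hcauchy

end
end

section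
/- Let X be a Banach space and C > 0 such that wca_{ρ*}(x*_n) ≤ C·wk_{X*}({x*_n : n ∈ ℕ}) for every bounded sequence (x*_n) in X*. Then for every Banach space Y and every bounded linear operator T : X → Y, cc(T) ≤ 2C·wk_{X*}(T*(B_{Y*})), where T* : Y* → X* is the adjoint and B_{Y*} is the closed unit ball of Y*. -/
open Metric NormedSpace Filter Topology Set

noncomputable section

/-!
Take a weakly Cauchy sequence `(x_k)` in `B_X` and `c < ca(T x_k)`. Choosing pairs `i_n, j_n ≥ n`
with `‖T x_{i_n} - T x_{j_n}‖ > c` and norming functionals `y_n ∈ B_{Y*}`, the functionals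
`f_n = T* y_n ∈ T*(B_{Y*})` satisfy `f_n(z_n) ≥ c/2` on the weakly null sequence
`z_n = (x_{i_n} - x_{j_n})/2` in `B_X`. Along any subsequence, testing `ca_{ρ*}` on the weakly
compact set `{0} ∪ {z_n}` gives at least `c/2`: otherwise `f_j(z_i)` would stay bounded away
from `0` for large `i, j`, and so would `g(z_i)` for a weak* cluster point `g` of `(f_j)`,
contradicting `z_i → 0` weakly. Hence `c/2 ≤ wca_{ρ*}(f_n) ≤ C·wk_{X*}(T*(B_{Y*}))`.
-/

section Measures

variable {Z : Type*} [NormedAddCommGroup Z]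

lemma exists_lt_norm_sub_of_lt_ca {x : ℕ → Z} {c : ℝ} (hc : c < ca x) (n : ℕ) :
    ∃ i j, n ≤ i ∧ n ≤ j ∧ c < ‖x i - x j‖ := by
  have hbdd : BddBelow (range fun n => sSup {r : ℝ | ∃ i j : ℕ, n ≤ i ∧ n ≤ j ∧
      r = ‖x i - x j‖}) := by
    refine ⟨0, ?_⟩
    rintro _ ⟨m, rfl⟩
    exact Real.sSup_nonneg (by rintro _ ⟨i, j, -, -, rfl⟩; positivity)
  have hne : {r : ℝ | ∃ i j : ℕ, n ≤ i ∧ n ≤ j ∧ r = ‖x i - x j‖}.Nonempty :=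
    ⟨_, n, n, le_rfl, le_rfl, rfl⟩
  obtain ⟨_, ⟨i, j, hi, hj, rfl⟩, hr⟩ := exists_lt_of_lt_csSup hne (hc.trans_le (ciInf_le hbdd n))
  exact ⟨i, j, hi, hj, hr⟩

lemma dhat_nonneg (A B : Set Z) : 0 ≤ dhat A B :=
  Real.iSup_nonneg fun _ => infDist_nonneg

lemma dhat_mono_left {A A' B : Set Z} (h : A ⊆ A') {R : ℝ}
    (hR : ∀ a ∈ A', infDist a B ≤ R) : dhat A B ≤ dhat A' B := by
  have hbdd : BddAbove (range fun a : A' => infDist (a : Z) B) := by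
    refine ⟨R, ?_⟩
    rintro _ ⟨a, rfl⟩
    exact hR a a.2
  exact Real.iSup_le (fun a => le_ciSup hbdd ⟨a.1, h a.2⟩) (dhat_nonneg _ _)

variable [NormedSpace ℝ Z]

lemma wkMeasure_nonneg (A : Set Z) : 0 ≤ wkMeasure A :=
  dhat_nonneg _ _

lemma wstarClosure_mono {A B : Set (StrongDual ℝ Z)} (hAB : A ⊆ B) :
    wstarClosure A ⊆ wstarClosure B :=
  preimage_mono (closure_mono (image_mono hAB))

lemma norm_le_of_mem_wstarClosure {A : Set (StrongDual ℝ Z)} {R : ℝ} (hA : ∀ a ∈ A, ‖a‖ ≤ R)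
    {g : StrongDual ℝ Z} (hg : g ∈ wstarClosure A) : ‖g‖ ≤ R := by
  have hclosed : IsClosed (WeakDual.toStrongDual ⁻¹' closedBall (0 : StrongDual ℝ Z) R) :=
    (WeakDual.isCompact_closedBall 0 R).isClosed
  have hsub : StrongDual.toWeakDual '' A ⊆ WeakDual.toStrongDual ⁻¹' closedBall 0 R := by
    rintro _ ⟨a, ha, rfl⟩
    simpa using hA a ha
  exact mem_closedBall_zero_iff.mp (closure_minimal hsub hclosed hg)

lemma wkMeasure_mono {A B : Set Z} (hAB : A ⊆ B) {R : ℝ} (hB : ∀ b ∈ B, ‖b‖ ≤ R) :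
    wkMeasure A ≤ wkMeasure B := by
  have hιB : ∀ a ∈ inclusionInDoubleDual ℝ Z '' B, ‖a‖ ≤ R := by
    rintro _ ⟨b, hb, rfl⟩
    exact (double_dual_bound ℝ Z b).trans (hB b hb)
  refine dhat_mono_left (wstarClosure_mono (image_mono hAB)) (R := R) fun a ha => ?_
  calc infDist a (range (inclusionInDoubleDual ℝ Z))
      ≤ dist a (inclusionInDoubleDual ℝ Z 0) := infDist_le_dist_of_mem ⟨0, rfl⟩
    _ = ‖a‖ := by simp
    _ ≤ R := norm_le_of_mem_wstarClosure hιB ha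

end Measures

section WeakSequences

variable {Z : Type*} [NormedAddCommGroup Z] [NormedSpace ℝ Z]

lemma WeaklyNull.comp_tendsto {z : ℕ → Z} (hz : WeaklyNull z) {φ : ℕ → ℕ}
    (hφ : Tendsto φ atTop atTop) : WeaklyNull (z ∘ φ) :=
  fun g => (hz g).comp hφ

lemma WeaklyNull.const_smul {z : ℕ → Z} (hz : WeaklyNull z) (a : ℝ) :
    WeaklyNull fun n => a • z n := by
  intro g
  simpa using (hz g).const_mul a

lemma WeaklyCauchy.weaklyNull_sub {x : ℕ → Z} (hx : WeaklyCauchy x) {i j : ℕ → ℕ}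
    (hi : Tendsto i atTop atTop) (hj : Tendsto j atTop atTop) :
    WeaklyNull fun n => x (i n) - x (j n) := by
  intro g
  obtain ⟨l, hl⟩ := hx g
  simpa using (hl.comp hi).sub (hl.comp hj)

lemma WeaklyNull.isWeaklyCompact_insert_range {z : ℕ → Z} (hz : WeaklyNull z) :
    IsWeaklyCompact (insert 0 (range z)) := by
  have hinj : Function.Injective (topDualPairing ℝ Z).flip := fun v w hvw =>
    SeparatingDual.eq_iff_forall_dual_eq.mpr fun g => LinearMap.congr_fun hvw g
  have htendsto : Tendsto (fun n => toWeakSpace ℝ Z (z n)) atTop (𝓝 (toWeakSpace ℝ Z 0)) := by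
    refine (WeakBilin.tendsto_iff_forall_eval_tendsto _ hinj).mpr fun g => ?_
    show Tendsto (fun n => g (z n)) atTop (𝓝 (g 0))
    simpa using hz g
  unfold IsWeaklyCompact
  rw [image_insert_eq, ← range_comp]
  exact htendsto.isCompact_insert_range

lemma exists_isWeakStarClusterPt {f : ℕ → StrongDual ℝ Z} {M : ℝ} (hf : ∀ n, ‖f n‖ ≤ M) :
    ∃ g, IsWeakStarClusterPt g f := by
  have hle : map (fun n => StrongDual.toWeakDual (f n)) atTop ≤
      𝓟 (WeakDual.toStrongDual ⁻¹' closedBall (0 : StrongDual ℝ Z) M) :=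
    le_principal_iff.mpr (mem_map.mpr (univ_mem' fun n => by simpa using hf n))
  obtain ⟨g, -, hg⟩ :=
    (WeakDual.isCompact_closedBall (0 : StrongDual ℝ Z) M).exists_mapClusterPt hle
  exact ⟨WeakDual.toStrongDual g, hg⟩

lemma IsWeakStarClusterPt.le_apply {g : StrongDual ℝ Z} {f : ℕ → StrongDual ℝ Z}
    (hg : IsWeakStarClusterPt g f) {v : Z} {t : ℝ} {n : ℕ} (h : ∀ j ≥ n, t ≤ f j v) :
    t ≤ g v := by
  by_contra! hlt
  have hnhds : {w : WeakDual ℝ Z | w v < t} ∈ 𝓝 (StrongDual.toWeakDual g) :=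
    (isOpen_Iio.preimage (WeakDual.eval_continuous v)).mem_nhds hlt
  obtain ⟨j, hj, hjt⟩ := frequently_atTop.mp (hg.frequently hnhds) n
  exact (h j hj).not_gt hjt

end WeakSequences

section CaRhoStar

variable {Z : Type*} [NormedAddCommGroup Z] [NormedSpace ℝ Z]

def tailOscOn (f : ℕ → StrongDual ℝ Z) (K : Set Z) (n : ℕ) : ℝ :=
  sSup {r : ℝ | ∃ i j : ℕ, n ≤ i ∧ n ≤ j ∧ ∃ v ∈ K, r = |f i v - f j v|}

variable {f : ℕ → StrongDual ℝ Z} {M : ℝ} {K : Set Z}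

lemma abs_sub_apply_le (hf : ∀ n, ‖f n‖ ≤ M) {v : Z} (hv : ‖v‖ ≤ 1) (i j : ℕ) :
    |f i v - f j v| ≤ 2 * M := by
  have hbound : ∀ k, |f k v| ≤ M := fun k =>
    calc |f k v| = ‖f k v‖ := (Real.norm_eq_abs _).symm
      _ ≤ ‖f k‖ * ‖v‖ := (f k).le_opNorm v
      _ ≤ M := by nlinarith [norm_nonneg (f k), norm_nonneg v, hf k]
  linarith [abs_sub (f i v) (f j v), hbound i, hbound j]

lemma tailOscOn_nonneg (n : ℕ) : 0 ≤ tailOscOn f K n :=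
  Real.sSup_nonneg (by rintro _ ⟨i, j, -, -, v, -, rfl⟩; positivity)

lemma tailOscOn_le (hf : ∀ n, ‖f n‖ ≤ M) (hK : K ⊆ closedBall 0 1) (n : ℕ) :
    tailOscOn f K n ≤ 2 * M := by
  have hM : 0 ≤ M := (norm_nonneg _).trans (hf 0)
  refine Real.sSup_le ?_ (by positivity)
  rintro _ ⟨i, j, -, -, v, hv, rfl⟩
  exact abs_sub_apply_le hf (mem_closedBall_zero_iff.mp (hK hv)) i j

lemma abs_sub_apply_le_tailOscOn (hf : ∀ n, ‖f n‖ ≤ M) (hK : K ⊆ closedBall 0 1) {n i j : ℕ}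
    (hi : n ≤ i) (hj : n ≤ j) {v : Z} (hv : v ∈ K) : |f i v - f j v| ≤ tailOscOn f K n := by
  refine le_csSup ⟨2 * M, ?_⟩ ⟨i, j, hi, hj, v, hv, rfl⟩
  rintro _ ⟨i, j, -, -, v, hv, rfl⟩
  exact abs_sub_apply_le hf (mem_closedBall_zero_iff.mp (hK hv)) i j

lemma iInf_tailOscOn_le_caRhoStar (hf : ∀ n, ‖f n‖ ≤ M) (hK : K ⊆ closedBall 0 1)
    (hKw : IsWeaklyCompact K) : ⨅ n, tailOscOn f K n ≤ caRhoStar f := by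
  have hbdd : BddAbove (range fun K' : {K : Set Z // K ⊆ closedBall 0 1 ∧ IsWeaklyCompact K} =>
      ⨅ n, tailOscOn f K'.1 n) := by
    refine ⟨2 * M, ?_⟩
    rintro _ ⟨K', rfl⟩
    exact (ciInf_le ⟨0, by rintro _ ⟨n, rfl⟩; exact tailOscOn_nonneg n⟩ 0).trans
      (tailOscOn_le hf K'.2.1 0)
  exact le_ciSup hbdd ⟨K, hK, hKw⟩

lemma le_caRhoStar_of_weaklyNull (hf : ∀ n, ‖f n‖ ≤ M) {z : ℕ → Z} (hz : WeaklyNull z)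
    (hz1 : ∀ n, ‖z n‖ ≤ 1) {b : ℝ} (hfz : ∀ n, b ≤ f n (z n)) : b ≤ caRhoStar f := by
  have hK : insert 0 (range z) ⊆ closedBall 0 1 := by
    rintro _ (rfl | ⟨n, rfl⟩)
    · exact mem_closedBall_self zero_le_one
    · exact mem_closedBall_zero_iff.mpr (hz1 n)
  refine le_trans (le_ciInf fun n => ?_)
    (iInf_tailOscOn_le_caRhoStar hf hK hz.isWeaklyCompact_insert_range)
  by_contra! hosc
  have hlow : ∀ i ≥ n, ∀ j ≥ n, b - tailOscOn f (insert 0 (range z)) n ≤ f j (z i) :=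
    fun i hi j hj => by
      have := abs_sub_apply_le_tailOscOn hf hK hi hj (mem_insert_of_mem _ ⟨i, rfl⟩)
      linarith [hfz i, le_abs_self (f i (z i) - f j (z i))]
  obtain ⟨g, hg⟩ := exists_isWeakStarClusterPt hf
  obtain ⟨i, hgi, hi⟩ :=
    (((hz g).eventually (gt_mem_nhds (sub_pos.mpr hosc))).and (eventually_ge_atTop n)).exists
  linarith [hg.le_apply (hlow i hi)]

lemma le_wcaRhoStar_of_weaklyNull (hf : ∀ n, ‖f n‖ ≤ M) {z : ℕ → Z} (hz : WeaklyNull z)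
    (hz1 : ∀ n, ‖z n‖ ≤ 1) {b : ℝ} (hfz : ∀ n, b ≤ f n (z n)) : b ≤ wcaRhoStar f :=
  have : Nonempty {φ : ℕ → ℕ // StrictMono φ} := ⟨⟨id, strictMono_id⟩⟩
  le_ciInf fun φ => le_caRhoStar_of_weaklyNull (fun _ => hf _)
    (hz.comp_tendsto φ.2.tendsto_atTop) (fun _ => hz1 _) fun _ => hfz _

end CaRhoStar

section Operator

variable {X Y : Type*} [NormedAddCommGroup X] [NormedSpace ℝ X]
  [NormedAddCommGroup Y] [NormedSpace ℝ Y]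

lemma adjointOp_apply (T : X →L[ℝ] Y) (g : StrongDual ℝ Y) (v : X) :
    adjointOp T g v = g (T v) :=
  rfl

lemma norm_le_of_mem_adjointOp_image_closedBall (T : X →L[ℝ] Y) :
    ∀ f ∈ adjointOp T '' closedBall 0 1, ‖f‖ ≤ ‖adjointOp T‖ := by
  rintro _ ⟨g, hg, rfl⟩
  exact (adjointOp T).unit_le_opNorm g (mem_closedBall_zero_iff.mp hg)

lemma exists_adjointOp_ge_of_lt_ca (T : X →L[ℝ] Y) {x : ℕ → X} (hx1 : ∀ n, ‖x n‖ ≤ 1)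
    (hx : WeaklyCauchy x) {c : ℝ} (hc : c < ca fun n => T (x n)) :
    ∃ (y : ℕ → StrongDual ℝ Y) (z : ℕ → X), (∀ n, ‖y n‖ ≤ 1) ∧ WeaklyNull z ∧
      (∀ n, ‖z n‖ ≤ 1) ∧ ∀ n, c / 2 ≤ adjointOp T (y n) (z n) := by
  choose i j hi hj hij using exists_lt_norm_sub_of_lt_ca hc
  choose y hy1 hy using fun n => exists_dual_vector'' ℝ (T (x (i n)) - T (x (j n)))
  refine ⟨y, fun n => (2⁻¹ : ℝ) • (x (i n) - x (j n)), hy1, ?_, fun n => ?_, fun n => ?_⟩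
  · exact (hx.weaklyNull_sub (tendsto_atTop_mono hi tendsto_id)
      (tendsto_atTop_mono hj tendsto_id)).const_smul _
  · rw [norm_smul, Real.norm_of_nonneg (by norm_num)]
    linarith [norm_sub_le (x (i n)) (x (j n)), hx1 (i n), hx1 (j n)]
  · rw [adjointOp_apply, map_smul, map_smul, map_sub, hy n, smul_eq_mul,
      RCLike.ofReal_real_eq_id, id_eq]
    linarith [hij n]

end Operator

theorem statement9_general {X : Type u} [NormedAddCommGroup X] [NormedSpace ℝ X]
    (C : ℝ) (hC : 0 < C)
    (h : ∀ f : ℕ → StrongDual ℝ X, (∃ M : ℝ, ∀ n, ‖f n‖ ≤ M) →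
      wcaRhoStar f ≤ C * wkMeasure (Set.range f)) :
    ∀ (Y : Type v) [NormedAddCommGroup Y] [NormedSpace ℝ Y] [CompleteSpace Y]
      (T : X →L[ℝ] Y),
      cc T ≤ 2 * C * wkMeasure (adjointOp T '' closedBall 0 1) := by
  intro Y _ _ _ T
  have hA := norm_le_of_mem_adjointOp_image_closedBall T
  refine Real.sSup_le ?_ (mul_nonneg (by positivity) (wkMeasure_nonneg _))
  rintro _ ⟨x, hx1, hx, rfl⟩
  refine le_of_forall_lt_imp_le_of_dense fun c hc => ?_
  obtain ⟨y, z, hy1, hz, hz1, hyz⟩ := exists_adjointOp_ge_of_lt_ca T hx1 hx hc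
  set f := fun n => adjointOp T (y n)
  have hfA : range f ⊆ adjointOp T '' closedBall 0 1 :=
    range_subset_iff.mpr fun n => mem_image_of_mem _ (mem_closedBall_zero_iff.mpr (hy1 n))
  have hf : ∀ n, ‖f n‖ ≤ ‖adjointOp T‖ := fun n => hA _ (hfA ⟨n, rfl⟩)
  calc c = 2 * (c / 2) := by ring
    _ ≤ 2 * wcaRhoStar f := by gcongr; exact le_wcaRhoStar_of_weaklyNull hf hz hz1 hyz
    _ ≤ 2 * (C * wkMeasure (range f)) := by gcongr; exact h f ⟨_, hf⟩
    _ ≤ 2 * (C * wkMeasure (adjointOp T '' closedBall 0 1)) := by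
        gcongr; exact wkMeasure_mono hfA hA
    _ = 2 * C * wkMeasure (adjointOp T '' closedBall 0 1) := by ring

/-- If `wca_{ρ*}(x*_n) ≤ C·wk_{X*}({x*_n})` for every bounded sequence in `X*`,
then for every Banach space `Y` and every operator `T : X → Y`,
`cc(T) ≤ 2C·wk_{X*}(T*(B_{Y*}))`. -/
theorem statement9 {X : Type u} [NormedAddCommGroup X] [NormedSpace ℝ X] [CompleteSpace X]
    (C : ℝ) (hC : 0 < C)
    (h : ∀ f : ℕ → StrongDual ℝ X, (∃ M : ℝ, ∀ n, ‖f n‖ ≤ M) →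
      wcaRhoStar f ≤ C * wkMeasure (Set.range f)) :
    ∀ (Y : Type v) [NormedAddCommGroup Y] [NormedSpace ℝ Y] [CompleteSpace Y]
      (T : X →L[ℝ] Y),
      cc T ≤ 2 * C * wkMeasure (adjointOp T '' closedBall 0 1) :=
  statement9_general C hC h

end
end
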